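/- arXiv:2205.03616 — 3 statements merged into one kernel-verified Lean document; each statement's English description precedes it below -/
import Mathlib

section
/- Let n ≥ 3. In the Artin group A(B_n) with standard generators t, s_1, …, s_{n-1}, set δ = t·s_1·s_2⋯s_{n-1} and s_n = δ·s_{n-1}·δ⁻¹. Then the subgroup of A(B_n) generated by s_1, …, s_n is isomorphic to the Artin group A(Ã_{n-1}) via an isomorphism sending the standard generator a_i of A(Ã_{n-1}) to s_i for every i ∈ {1, …, n}. -/
namespace Stmt0

/-- The braid relator `x y x (y x y)⁻¹` (weight 3). -/
def braidRel {γ : Type} (x y : FreeGroup γ) : FreeGroup γ := x * y * x * (y * x * y)⁻¹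

/-- The commutation relator `x y (y x)⁻¹` (weight 2). -/
def commRel {γ : Type} (x y : FreeGroup γ) : FreeGroup γ := x * y * (y * x)⁻¹

/-- The weight-4 relator `x y x y (y x y x)⁻¹`. -/
def w4Rel {γ : Type} (x y : FreeGroup γ) : FreeGroup γ := x * y * x * y * (y * x * y * x)⁻¹

/-- Relations of the Artin group `A(B_n)`.  Generator `0` is `t` and generator
`i` (for `1 ≤ i ≤ n - 1`) is `s_i`. -/
def BnRels (n : ℕ) : Set (FreeGroup (Fin n)) :=
  { r | ∃ i j : Fin n,
      ((i : ℕ) = 0 ∧ (j : ℕ) = 1 ∧ r = w4Rel (.of i) (.of j)) ∨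
      (1 ≤ (i : ℕ) ∧ (j : ℕ) = (i : ℕ) + 1 ∧ r = braidRel (.of i) (.of j)) ∨
      ((i : ℕ) = 0 ∧ 2 ≤ (j : ℕ) ∧ r = commRel (.of i) (.of j)) ∨
      (1 ≤ (i : ℕ) ∧ (i : ℕ) + 2 ≤ (j : ℕ) ∧ r = commRel (.of i) (.of j)) }

/-- The Artin group `A(B_n)`. -/
abbrev ArtinB (n : ℕ) : Type := PresentedGroup (BnRels n)

/-- The standard generators of `A(B_n)`: `bgen n 0 = t` and `bgen n i = s_i`
for `1 ≤ i ≤ n - 1` (junk value `1` otherwise). -/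
def bgen (n : ℕ) (i : ℕ) : ArtinB n :=
  if h : i < n then PresentedGroup.of ⟨i, h⟩ else 1

/-- The element `δ = t · s_1 · s_2 ⋯ s_{n-1}` of `A(B_n)`. -/
def delta (n : ℕ) : ArtinB n := ((List.range n).map (bgen n)).prod

/-- The elements `s_1, …, s_n` of `A(B_n)`, where `s_n = δ · s_{n-1} · δ⁻¹`. -/
def sgen (n : ℕ) (i : ℕ) : ArtinB n :=
  if i = n then delta n * bgen n (n - 1) * (delta n)⁻¹ else bgen n i

/-- Relations of the Artin group `A(Ã_{n-1})`: the generator indexed by `i : Fin n`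
is `a_{i+1}`; cyclically adjacent generators braid, all other pairs commute. -/
def AtildeRels (n : ℕ) : Set (FreeGroup (Fin n)) :=
  { r | ∃ i j : Fin n,
      ((j : ℕ) = ((i : ℕ) + 1) % n ∧ r = braidRel (.of i) (.of j)) ∨
      (i ≠ j ∧ (j : ℕ) ≠ ((i : ℕ) + 1) % n ∧ (i : ℕ) ≠ ((j : ℕ) + 1) % n ∧
        r = commRel (.of i) (.of j)) }

/-- The Artin group `A(Ã_{n-1})`. -/
abbrev Atilde (n : ℕ) : Type := PresentedGroup (AtildeRels n)

/-- The standard generator `a_i` (for `1 ≤ i ≤ n`) of `A(Ã_{n-1})`. -/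
def a (n : ℕ) (i : ℕ) : Atilde n :=
  if h : 0 < n then PresentedGroup.of ⟨(i - 1) % n, Nat.mod_lt _ h⟩ else 1


/-!
Conjugation by `δ` permutes `s_1, …, s_n` cyclically; the relation `t s_1 t s_1 = s_1 t s_1 t`
enters exactly in `δ s_n δ⁻¹ = s_1`, i.e. `δ² s_{n-1} δ⁻² = s_1`. Hence every relation of
`A(Ã_{n-1})` between the `s_i` is a conjugate of a relation among `s_1, …, s_{n-1}`, and
`a_i ↦ s_i` is a homomorphism. It is injective because composing it with the homomorphism
`A(B_n) → A(Ã_{n-1}) ⋊ ℤ`, where `ℤ` rotates the generators `a_i`, given by `s_i ↦ a_i` and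
`t ↦ z (a_1 ⋯ a_{n-1})⁻¹` (so that `δ ↦ z`), yields the inclusion `A(Ã_{n-1}) → A(Ã_{n-1}) ⋊ ℤ`.
-/

section OrderedProd

variable {G : Type*} [Group G]

def orderedProd (g : ℕ → G) (s k : ℕ) : G := ((List.range' s k).map g).prod

variable (g : ℕ → G)

lemma orderedProd_succ (s k : ℕ) : orderedProd g s (k + 1) = orderedProd g s k * g (s + k) := by
  simp [orderedProd, List.range'_1_concat]

lemma orderedProd_succ' (s k : ℕ) : orderedProd g s (k + 1) = g s * orderedProd g (s + 1) k := by
  simp [orderedProd, List.range'_succ]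

lemma orderedProd_congr {g' : ℕ → G} {s k : ℕ} (h : ∀ i, s ≤ i → i < s + k → g i = g' i) :
    orderedProd g s k = orderedProd g' s k :=
  congrArg List.prod <| List.map_congr_left fun i hi => by
    rw [List.mem_range'_1] at hi
    exact h i hi.1 hi.2

lemma commute_orderedProd {x : G} {s k : ℕ} (h : ∀ i, s ≤ i → i < s + k → Commute x (g i)) :
    Commute x (orderedProd g s k) :=
  Commute.list_prod_right _ _ fun y hy => by
    obtain ⟨i, hi, rfl⟩ := List.mem_map.1 hy
    rw [List.mem_range'_1] at hi
    exact h i hi.1 hi.2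

lemma map_orderedProd {H : Type*} [Group H] (φ : G →* H) (s k : ℕ) :
    φ (orderedProd g s k) = orderedProd (fun i => φ (g i)) s k := by
  simp [orderedProd, map_list_prod, Function.comp_def]

end OrderedProd

lemma SemiconjBy.eq_conj {G : Type*} [Group G] {a x y : G} (h : SemiconjBy a x y) :
    y = MulAut.conj a x := by
  rw [MulAut.conj_apply, eq_mul_inv_iff_mul_eq, h.eq]

structure ArtinARelations {G : Type*} [Group G] (g : ℕ → G) (m : ℕ) : Prop where
  braid : ∀ i, 1 ≤ i → i + 1 ≤ m → g i * g (i + 1) * g i = g (i + 1) * g i * g (i + 1)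
  comm : ∀ i j, 1 ≤ i → i + 2 ≤ j → j ≤ m → Commute (g i) (g j)

namespace ArtinARelations

variable {G : Type*} [Group G] {g : ℕ → G} {m : ℕ}

lemma mono (h : ArtinARelations g m) {m' : ℕ} (hm : m' ≤ m) : ArtinARelations g m' :=
  ⟨fun i h1 h2 => h.braid i h1 (by omega), fun i j h1 h2 h3 => h.comm i j h1 h2 (by omega)⟩

lemma map (h : ArtinARelations g m) {H : Type*} [Group H] (φ : G →* H) :
    ArtinARelations (fun i => φ (g i)) m :=
  ⟨fun i h1 h2 => by simp only [← map_mul, h.braid i h1 h2],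
    fun i j h1 h2 h3 => (h.comm i j h1 h2 h3).map φ⟩

lemma semiconjBy_orderedProd (h : ArtinARelations g m) {i : ℕ} (h1 : 1 ≤ i) (h2 : i < m) :
    SemiconjBy (orderedProd g 1 m) (g i) (g (i + 1)) := by
  induction m with
  | zero => omega
  | succ m ih =>
    rw [SemiconjBy, orderedProd_succ, Nat.add_comm 1 m]
    rcases Nat.lt_or_ge i m with hi | hi
    · have hc : Commute (g i) (g (m + 1)) := h.comm i (m + 1) h1 (by omega) le_rfl
      rw [mul_assoc, ← hc.eq, ← mul_assoc, (ih (h.mono m.le_succ) hi).eq, mul_assoc]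
    · obtain ⟨k, rfl⟩ : ∃ k, m = k + 1 := ⟨m - 1, by omega⟩
      obtain rfl : i = k + 1 := by omega
      have hc : Commute (g (k + 2)) (orderedProd g 1 k) :=
        commute_orderedProd g fun j h1 h2 => (h.comm j (k + 2) h1 (by omega) le_rfl).symm
      rw [orderedProd_succ, Nat.add_comm 1 k]
      calc orderedProd g 1 k * g (k + 1) * g (k + 2) * g (k + 1)
          = orderedProd g 1 k * (g (k + 2) * g (k + 1) * g (k + 2)) := by
            rw [← h.braid (k + 1) le_add_self le_rfl]; group
        _ = g (k + 2) * (orderedProd g 1 k * g (k + 1) * g (k + 2)) := by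
            rw [← mul_assoc, ← mul_assoc, ← hc.eq]; group

lemma semiconjBy_orderedProd_orderedProd (h : ArtinARelations g m) {k : ℕ} (hk : k < m) :
    SemiconjBy (orderedProd g 1 m) (orderedProd g 1 k) (orderedProd g 2 k) := by
  induction k with
  | zero => exact SemiconjBy.one_right _
  | succ k ih =>
    rw [orderedProd_succ, orderedProd_succ, show 2 + k = 1 + k + 1 by omega]
    exact (ih (by omega)).mul_right (h.semiconjBy_orderedProd (by omega) (by omega))

lemma semiconjBy_orderedProd_mul_orderedProd (h : ArtinARelations g (m + 1)) :
    SemiconjBy (orderedProd g 1 (m + 1) * orderedProd g 1 m) (g (m + 1)) (g 1) := by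
  have hc : orderedProd g 1 (m + 1) = orderedProd g 1 m * g (m + 1) := by
    rw [orderedProd_succ, Nat.add_comm 1 m]
  have hc' : orderedProd g 1 (m + 1) = g 1 * orderedProd g 2 m := orderedProd_succ' g 1 m
  calc orderedProd g 1 (m + 1) * orderedProd g 1 m * g (m + 1)
      = orderedProd g 1 (m + 1) * orderedProd g 1 (m + 1) := by rw [mul_assoc, ← hc]
    _ = g 1 * (orderedProd g 2 m * orderedProd g 1 (m + 1)) := by
        rw [hc']; group
    _ = g 1 * (orderedProd g 1 (m + 1) * orderedProd g 1 m) := by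
        rw [(h.semiconjBy_orderedProd_orderedProd m.lt_succ_self).eq]

lemma commute_iff_semiconjBy (h : ArtinARelations g m) (t : G) {i : ℕ} (h1 : 1 ≤ i)
    (h2 : i < m) :
    Commute t (g (i + 1)) ↔ SemiconjBy (t * orderedProd g 1 m) (g i) (g (i + 1)) := by
  have hc := h.semiconjBy_orderedProd h1 h2
  refine ⟨fun ht => SemiconjBy.mul_left ht hc, fun htc => ?_⟩
  have := htc.eq
  rw [mul_assoc, hc.eq, ← mul_assoc, ← mul_assoc] at this
  exact mul_right_cancel this

lemma w4_iff_semiconjBy (h : ArtinARelations g m) (hm : 1 ≤ m) {t : G}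
    (ht : ∀ j, 2 ≤ j → j ≤ m → Commute t (g j)) :
    t * g 1 * t * g 1 = g 1 * t * g 1 * t ↔
      SemiconjBy ((t * orderedProd g 1 m) ^ 2) (g m) (g 1) := by
  obtain ⟨m, rfl⟩ : ∃ k, m = k + 1 := ⟨m - 1, by omega⟩
  set c := orderedProd g 1 (m + 1)
  set X := c * orderedProd g 1 m
  have hQ : Commute t (orderedProd g 2 m) :=
    commute_orderedProd g fun j h1 h2 => ht j h1 (by omega)
  have hsq : (t * c) ^ 2 = t * g 1 * t * X := by
    calc (t * c) ^ 2 = t * g 1 * (orderedProd g 2 m * t) * c := by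
          rw [sq, show c = g 1 * orderedProd g 2 m from orderedProd_succ' g 1 m]; group
      _ = t * g 1 * t * (orderedProd g 2 m * c) := by rw [← hQ.eq]; group
      _ = t * g 1 * t * X := by
          rw [← (h.semiconjBy_orderedProd_orderedProd m.lt_succ_self).eq]
  have hX : X * g (m + 1) = g 1 * X := h.semiconjBy_orderedProd_mul_orderedProd
  have hlhs : t * g 1 * t * X * g (m + 1) = t * g 1 * t * g 1 * X := by
    rw [mul_assoc _ X, hX]; group
  rw [SemiconjBy, hsq, hlhs, show g 1 * (t * g 1 * t * X) = g 1 * t * g 1 * t * X by group,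
    mul_left_inj]

end ArtinARelations

section PresentedGroup

variable {α : Type} {rels : Set (FreeGroup α)} {x y : α}

lemma of_braid_of_mem (h : braidRel (.of x) (.of y) ∈ rels) :
    (PresentedGroup.of x : PresentedGroup rels) * .of y * .of x = .of y * .of x * .of y := by
  have := PresentedGroup.one_of_mem h
  simp only [braidRel, map_mul, map_inv, mul_inv_eq_one] at this
  exact this

lemma of_commute_of_mem (h : commRel (.of x) (.of y) ∈ rels) :
    Commute (PresentedGroup.of x : PresentedGroup rels) (.of y) := by
  have := PresentedGroup.one_of_mem h
  simp only [commRel, map_mul, map_inv, mul_inv_eq_one] at this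
  exact this

lemma of_w4_of_mem (h : w4Rel (.of x) (.of y) ∈ rels) :
    (PresentedGroup.of x : PresentedGroup rels) * .of y * .of x * .of y
      = .of y * .of x * .of y * .of x := by
  have := PresentedGroup.one_of_mem h
  simp only [w4Rel, map_mul, map_inv, mul_inv_eq_one] at this
  exact this

end PresentedGroup

structure ArtinBRelations {G : Type*} [Group G] (t : G) (g : ℕ → G) (m : ℕ) : Prop
    extends ArtinARelations g m where
  commute_left : ∀ j, 2 ≤ j → j ≤ m → Commute t (g j)
  w4 : t * g 1 * t * g 1 = g 1 * t * g 1 * t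

section ArtinB

variable {n : ℕ}

lemma lift_eq_one_of_mem_BnRels {H : Type*} [Group H] {t : H} {g : ℕ → H}
    (h : ArtinBRelations t g (n - 1)) :
    ∀ r ∈ BnRels n, FreeGroup.lift (fun k : Fin n => if (k : ℕ) = 0 then t else g k) r = 1 := by
  rintro r ⟨i, j, ⟨hi, hj, rfl⟩ | ⟨hi, hj, rfl⟩ | ⟨hi, hj, rfl⟩ | ⟨hi, hj, rfl⟩⟩ <;>
    simp only [w4Rel, braidRel, commRel, map_mul, map_inv, FreeGroup.lift_apply_of, mul_inv_eq_one]
  · simpa only [hi, hj, ↓reduceIte, one_ne_zero] using h.w4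
  · have hi' : (i : ℕ) ≠ 0 := by omega
    simpa only [hi', hj, ↓reduceIte, Nat.add_one_ne_zero] using h.braid i hi (by omega)
  · have hj' : (j : ℕ) ≠ 0 := by omega
    simpa only [hi, hj', ↓reduceIte] using (h.commute_left j hj (by omega)).eq
  · have hi' : (i : ℕ) ≠ 0 := by omega
    have hj' : (j : ℕ) ≠ 0 := by omega
    simpa only [hi', hj', ↓reduceIte] using (h.comm i j hi hj (by omega)).eq

lemma bgen_eq_of {i : ℕ} (h : i < n) : bgen n i = PresentedGroup.of ⟨i, h⟩ := dif_pos h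

lemma artinBRelations_bgen (hn : 1 < n) : ArtinBRelations (bgen n 0) (bgen n) (n - 1) where
  braid i h1 h2 := by
    rw [bgen_eq_of (show i < n by omega), bgen_eq_of (show i + 1 < n by omega)]
    exact of_braid_of_mem ⟨_, _, Or.inr (Or.inl ⟨h1, rfl, rfl⟩)⟩
  comm i j h1 h2 h3 := by
    rw [bgen_eq_of (show i < n by omega), bgen_eq_of (show j < n by omega)]
    exact of_commute_of_mem ⟨_, _, Or.inr (Or.inr (Or.inr ⟨h1, h2, rfl⟩))⟩
  commute_left j h1 h2 := by
    rw [bgen_eq_of (show 0 < n by omega), bgen_eq_of (show j < n by omega)]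
    exact of_commute_of_mem ⟨_, _, Or.inr (Or.inr (Or.inl ⟨rfl, h1, rfl⟩))⟩
  w4 := by
    rw [bgen_eq_of (show 0 < n by omega), bgen_eq_of hn]
    exact of_w4_of_mem ⟨_, _, Or.inl ⟨rfl, rfl, rfl⟩⟩

lemma delta_eq (hn : 0 < n) : delta n = bgen n 0 * orderedProd (bgen n) 1 (n - 1) := by
  obtain ⟨m, rfl⟩ : ∃ m, n = m + 1 := ⟨n - 1, by omega⟩
  simp [delta, orderedProd, List.range_eq_range', List.range'_succ]

lemma sgen_of_ne {i : ℕ} (h : i ≠ n) : sgen n i = bgen n i := if_neg h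

lemma semiconjBy_delta_bgen (hn : 1 < n) {i : ℕ} (h1 : 1 ≤ i) (h2 : i + 1 < n) :
    SemiconjBy (delta n) (bgen n i) (bgen n (i + 1)) := by
  have hB := artinBRelations_bgen hn
  rw [delta_eq (by omega)]
  exact (hB.commute_iff_semiconjBy _ h1 (by omega)).1
    (hB.commute_left (i + 1) (by omega) (by omega))

lemma semiconjBy_delta_sq (hn : 1 < n) :
    SemiconjBy (delta n ^ 2) (bgen n (n - 1)) (bgen n 1) := by
  have hB := artinBRelations_bgen hn
  rw [delta_eq (by omega)]
  exact (hB.w4_iff_semiconjBy (by omega) hB.commute_left).1 hB.w4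

lemma semiconjBy_delta_sgen (hn : 1 < n) {i : ℕ} (h1 : 1 ≤ i) (h2 : i ≤ n) :
    SemiconjBy (delta n) (sgen n i) (sgen n (i % n + 1)) := by
  have hsn : SemiconjBy (delta n) (bgen n (n - 1)) (sgen n n) := by
    rw [sgen, if_pos rfl]; exact SemiconjBy.conj_mk _ _
  rcases Nat.lt_or_ge (i + 1) n with hi | hi
  · rw [Nat.mod_eq_of_lt (by omega), sgen_of_ne (by omega), sgen_of_ne (by omega)]
    exact semiconjBy_delta_bgen hn h1 hi
  rcases Nat.lt_or_ge i n with hi' | hi'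
  · obtain rfl : i = n - 1 := by omega
    rw [Nat.mod_eq_of_lt hi', Nat.sub_add_cancel (by omega), sgen_of_ne (by omega)]
    exact hsn
  obtain rfl : n = i := by omega
  rw [Nat.mod_self, zero_add, sgen_of_ne (show 1 ≠ n by omega),
    SemiconjBy.eq_conj (semiconjBy_delta_sq hn), SemiconjBy.eq_conj hsn]
  simp only [MulAut.conj_apply, SemiconjBy, sq]
  group

end ArtinB

section Atilde

variable {n : ℕ} [NeZero n]

lemma val_add_one_eq_mod (i : Fin n) : ((i + 1 : Fin n) : ℕ) = ((i : ℕ) + 1) % n := by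
  simp [Fin.val_add]

lemma ofNat_add_one (m : ℕ) : Fin.ofNat n (m + 1) = Fin.ofNat n m + 1 := by
  ext; simp [Fin.val_add]

lemma val_eq_succ_mod_iff {i j : Fin n} : (j : ℕ) = ((i : ℕ) + 1) % n ↔ j = i + 1 := by
  rw [Fin.ext_iff, val_add_one_eq_mod]

lemma mem_AtildeRels_iff {r : FreeGroup (Fin n)} :
    r ∈ AtildeRels n ↔ ∃ i j : Fin n,
      (j = i + 1 ∧ r = braidRel (.of i) (.of j)) ∨
      (i ≠ j ∧ j ≠ i + 1 ∧ i ≠ j + 1 ∧ r = commRel (.of i) (.of j)) := by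
  simp only [AtildeRels, Set.mem_ofPred_eq, ne_eq, val_eq_succ_mod_iff]

lemma lift_eq_one_of_mem_AtildeRels {H : Type*} [Group H] {f : Fin n → H}
    (hbraid : ∀ i, f i * f (i + 1) * f i = f (i + 1) * f i * f (i + 1))
    (hcomm : ∀ i j, i ≠ j → j ≠ i + 1 → i ≠ j + 1 → Commute (f i) (f j)) :
    ∀ r ∈ AtildeRels n, FreeGroup.lift f r = 1 := by
  intro r hr
  obtain ⟨i, j, ⟨rfl, rfl⟩ | ⟨hij, hji, hij', rfl⟩⟩ := mem_AtildeRels_iff.1 hr <;>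
    simp only [braidRel, commRel, map_mul, map_inv, FreeGroup.lift_apply_of, mul_inv_eq_one]
  exacts [hbraid i, (hcomm i j hij hji hij').eq]

lemma lift_eq_one_of_semiconjBy {H : Type*} [Group H] {f : Fin n → H} {d : H}
    (hd : ∀ k, SemiconjBy d (f k) (f (k + 1)))
    (hbraid : f 0 * f 1 * f 0 = f 1 * f 0 * f 1)
    (hcomm : ∀ j, j ≠ 0 → j ≠ 1 → j ≠ -1 → Commute (f 0) (f j)) :
    ∀ r ∈ AtildeRels n, FreeGroup.lift f r = 1 := by
  have hpow : ∀ (m : ℕ) k, SemiconjBy (d ^ m) (f k) (f (k + Fin.ofNat n m)) := by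
    intro m
    induction m with
    | zero => simp
    | succ m ih =>
      intro k
      rw [pow_succ', ofNat_add_one, ← add_assoc]
      exact (hd _).mul_left (ih k)
  have hrot : ∀ i k, f (k + i) = MulAut.conj (d ^ (i : ℕ)) (f k) := fun i k => by
    simpa using SemiconjBy.eq_conj (hpow i k)
  have h0 : ∀ i, f i = MulAut.conj (d ^ (i : ℕ)) (f 0) := fun i => by simpa using hrot i 0
  refine lift_eq_one_of_mem_AtildeRels (fun i => ?_) (fun i j hij hji hij' => ?_)
  · rw [h0, add_comm, hrot]
    simp only [← map_mul, hbraid]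
  · rw [h0, ← sub_add_cancel j i, hrot]
    refine (hcomm (j - i) (sub_ne_zero.2 hij.symm) (fun h => hji ?_) (fun h => hij' ?_)).map _
    · rw [← h, add_sub_cancel]
    · rw [← sub_sub_cancel j i, h, sub_neg_eq_add]

lemma Atilde.of_braid (i : Fin n) :
    (PresentedGroup.of i : Atilde n) * .of (i + 1) * .of i = .of (i + 1) * .of i * .of (i + 1) :=
  of_braid_of_mem (mem_AtildeRels_iff.2 ⟨i, i + 1, Or.inl ⟨rfl, rfl⟩⟩)

lemma Atilde.of_commute {i j : Fin n} (h1 : i ≠ j) (h2 : j ≠ i + 1) (h3 : i ≠ j + 1) :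
    Commute (PresentedGroup.of i : Atilde n) (.of j) :=
  of_commute_of_mem (mem_AtildeRels_iff.2 ⟨i, j, Or.inr ⟨h1, h2, h3, rfl⟩⟩)

def Atilde.rotate (k : Fin n) : Atilde n →* Atilde n :=
  PresentedGroup.toGroup (f := fun i => .of (i + k)) <| lift_eq_one_of_mem_AtildeRels
    (fun i => by rw [add_right_comm]; exact Atilde.of_braid _)
    (fun i j h1 h2 h3 => Atilde.of_commute (by simpa using h1)
      (by rwa [add_right_comm, Ne, add_left_inj]) (by rwa [add_right_comm j, Ne, add_left_inj]))

lemma Atilde.rotate_of (k i : Fin n) : Atilde.rotate k (.of i) = .of (i + k) :=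
  PresentedGroup.toGroup.of _

def Atilde.rotateEquiv (k : Fin n) : Atilde n ≃* Atilde n :=
  (Atilde.rotate k).toMulEquiv (Atilde.rotate (-k))
    (PresentedGroup.ext fun i => by simp [Atilde.rotate_of])
    (PresentedGroup.ext fun i => by simp [Atilde.rotate_of])

lemma Atilde.rotateEquiv_of (k i : Fin n) : Atilde.rotateEquiv k (.of i) = .of (i + k) :=
  Atilde.rotate_of k i

lemma a_succ (i : ℕ) : a n (i + 1) = .of (Fin.ofNat n i) := by
  rw [a, dif_pos (NeZero.pos n)]
  congr 1

lemma a_add_self : a n (n + 1) = a n 1 := by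
  simp [a_succ]

lemma rotateEquiv_one_a {i : ℕ} (hi : 1 ≤ i) :
    Atilde.rotateEquiv (n := n) 1 (a n i) = a n (i + 1) := by
  obtain ⟨k, rfl⟩ : ∃ k, i = k + 1 := ⟨i - 1, by omega⟩
  rw [a_succ, a_succ, Atilde.rotateEquiv_of, ofNat_add_one]

lemma artinARelations_a : ArtinARelations (a n) (n - 1) where
  braid i h1 h2 := by
    obtain ⟨k, rfl⟩ : ∃ k, i = k + 1 := ⟨i - 1, by omega⟩
    rw [a_succ, a_succ, ofNat_add_one]
    exact Atilde.of_braid _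
  comm i j h1 h2 h3 := by
    obtain ⟨k, rfl⟩ : ∃ k, i = k + 1 := ⟨i - 1, by omega⟩
    obtain ⟨l, rfl⟩ : ∃ l, j = l + 1 := ⟨j - 1, by omega⟩
    rw [a_succ, a_succ]
    apply Atilde.of_commute <;>
      simp [Fin.ext_iff, val_add_one_eq_mod, Nat.mod_eq_of_lt, show k < n by omega,
        show l < n by omega, show k + 1 < n by omega, show l + 1 < n by omega] <;> omega

end Atilde

section Semidirect

open SemidirectProduct

variable (n : ℕ) [NeZero n]

abbrev AtildeSemidirect : Type :=
  Atilde n ⋊[zpowersHom (MulAut (Atilde n)) (Atilde.rotateEquiv 1)] Multiplicative ℤ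

variable {n}

def rotationGen : AtildeSemidirect n := inr (Multiplicative.ofAdd (1 : ℤ))

lemma semiconjBy_rotationGen_inl_a {i : ℕ} (hi : 1 ≤ i) :
    SemiconjBy (rotationGen : AtildeSemidirect n) (inl (a n i)) (inl (a n (i + 1))) := by
  have h := inl_aut (φ := zpowersHom (MulAut (Atilde n)) (Atilde.rotateEquiv 1))
    (Multiplicative.ofAdd (1 : ℤ)) (a n i)
  rw [zpowersHom_apply, toAdd_ofAdd, zpow_one, rotateEquiv_one_a hi, map_inv inr] at h
  rw [h]
  exact SemiconjBy.conj_mk _ _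

-- Chosen so that `δ = t s_1 ⋯ s_{n-1}` is sent to `rotationGen`.
def tImage : AtildeSemidirect n := rotationGen * (orderedProd (fun i => inl (a n i)) 1 (n - 1))⁻¹

lemma artinBRelations_tImage (hn : 2 ≤ n) :
    ArtinBRelations (tImage : AtildeSemidirect n) (fun i => inl (a n i)) (n - 1) := by
  have hA := (artinARelations_a (n := n)).map (inl : Atilde n →* AtildeSemidirect n)
  have hT : tImage * orderedProd (fun i => inl (a n i)) 1 (n - 1) = rotationGen :=
    inv_mul_cancel_right _ _
  have hcomm : ∀ j, 2 ≤ j → j ≤ n - 1 → Commute tImage (inl (a n j)) := fun j h1 h2 => by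
    obtain ⟨i, rfl⟩ : ∃ i, j = i + 1 := ⟨j - 1, by omega⟩
    exact (hA.commute_iff_semiconjBy _ (by omega) (by omega)).2
      (hT ▸ semiconjBy_rotationGen_inl_a (by omega))
  refine { hA with commute_left := hcomm, w4 := (hA.w4_iff_semiconjBy (by omega) hcomm).2 ?_ }
  rw [hT, sq]
  have h1 := semiconjBy_rotationGen_inl_a (n := n) (i := n - 1) (by omega)
  have h2 := semiconjBy_rotationGen_inl_a (n := n) (i := n) (by omega)
  rw [Nat.sub_add_cancel (by omega)] at h1
  rw [a_add_self] at h2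
  exact h2.mul_left h1

def toAtildeSemidirect (hn : 2 ≤ n) : ArtinB n →* AtildeSemidirect n :=
  PresentedGroup.toGroup (lift_eq_one_of_mem_BnRels (artinBRelations_tImage hn))

lemma toAtildeSemidirect_bgen (hn : 2 ≤ n) {i : ℕ} (h1 : 1 ≤ i) (h2 : i < n) :
    toAtildeSemidirect hn (bgen n i) = inl (a n i) := by
  rw [bgen_eq_of h2, toAtildeSemidirect, PresentedGroup.toGroup.of]
  simp [show i ≠ 0 by omega]

lemma toAtildeSemidirect_delta (hn : 2 ≤ n) : toAtildeSemidirect hn (delta n) = rotationGen := by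
  rw [delta_eq (by omega), map_mul, map_orderedProd, orderedProd_congr _
    fun i h1 h2 => toAtildeSemidirect_bgen hn h1 (by omega), bgen_eq_of (by omega),
    toAtildeSemidirect, PresentedGroup.toGroup.of]
  simp [tImage]

lemma toAtildeSemidirect_sgen (hn : 2 ≤ n) {i : ℕ} (h1 : 1 ≤ i) (h2 : i ≤ n) :
    toAtildeSemidirect hn (sgen n i) = inl (a n i) := by
  rcases Nat.lt_or_ge i n with hi | hi
  · rw [sgen_of_ne (by omega), toAtildeSemidirect_bgen hn h1 hi]
  obtain rfl : i = n := by omega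
  have h := semiconjBy_rotationGen_inl_a (n := i) (i := i - 1) (by omega)
  rw [Nat.sub_add_cancel (by omega)] at h
  rw [sgen, if_pos rfl, map_mul, map_mul, map_inv, toAtildeSemidirect_delta,
    toAtildeSemidirect_bgen hn (by omega) (by omega), SemiconjBy.eq_conj h, MulAut.conj_apply]

end Semidirect

section SgenHom

variable {n : ℕ}

lemma lift_sgen_eq_one (hn : 3 ≤ n) :
    ∀ r ∈ AtildeRels n, FreeGroup.lift (fun k : Fin n => sgen n (k + 1)) r = 1 := by
  have : NeZero n := ⟨by omega⟩
  have hB := artinBRelations_bgen (show 1 < n by omega)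
  have hval1 : ((1 : Fin n) : ℕ) = 1 := by rw [Fin.val_one', Nat.mod_eq_of_lt (by omega)]
  refine lift_eq_one_of_semiconjBy (d := delta n) (fun k => ?_) ?_ (fun j hj0 hj1 hj2 => ?_)
  · rw [val_add_one_eq_mod]
    exact semiconjBy_delta_sgen (by omega) (by omega) k.isLt
  · rw [Fin.val_zero, hval1, sgen_of_ne (show 0 + 1 ≠ n by omega),
      sgen_of_ne (show 1 + 1 ≠ n by omega)]
    exact hB.braid 1 le_rfl (by omega)
  · have h0 : (j : ℕ) ≠ 0 := Fin.val_ne_zero_iff.2 hj0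
    have h1 : (j : ℕ) ≠ 1 := by rwa [Ne, Fin.ext_iff, hval1] at hj1
    have h2 : (j : ℕ) + 1 ≠ n := fun h => hj2 <| by
      rw [eq_neg_iff_add_eq_zero, Fin.ext_iff, val_add_one_eq_mod, h, Nat.mod_self, Fin.val_zero]
    rw [Fin.val_zero, sgen_of_ne (show 0 + 1 ≠ n by omega), sgen_of_ne h2]
    exact hB.comm 1 (j + 1) le_rfl (by omega) (by omega)

def sgenHom (hn : 3 ≤ n) : Atilde n →* ArtinB n := PresentedGroup.toGroup (lift_sgen_eq_one hn)

lemma sgenHom_a (hn : 3 ≤ n) {i : ℕ} (h1 : 1 ≤ i) (h2 : i ≤ n) : sgenHom hn (a n i) = sgen n i := by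
  have : NeZero n := ⟨by omega⟩
  obtain ⟨k, rfl⟩ : ∃ k, i = k + 1 := ⟨i - 1, by omega⟩
  rw [a_succ, sgenHom, PresentedGroup.toGroup.of, Fin.val_ofNat, Nat.mod_eq_of_lt (by omega)]

lemma sgenHom_injective (hn : 3 ≤ n) : Function.Injective (sgenHom hn) := by
  have : NeZero n := ⟨by omega⟩
  have hcomp : (toAtildeSemidirect (by omega)).comp (sgenHom hn) = SemidirectProduct.inl := by
    refine PresentedGroup.ext fun k => ?_
    have hk : a n (k + 1) = .of k := by simp [a_succ]
    rw [MonoidHom.comp_apply, ← hk, sgenHom_a hn (by omega) (by omega),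
      toAtildeSemidirect_sgen _ (by omega) (by omega)]
  refine Function.Injective.of_comp (f := toAtildeSemidirect (n := n) (by omega)) ?_
  rw [← MonoidHom.coe_comp, hcomp]
  exact SemidirectProduct.inl_injective

lemma sgenHom_range (hn : 3 ≤ n) :
    (sgenHom hn).range = Subgroup.closure (sgen n '' Set.Icc 1 n) := by
  rw [MonoidHom.range_eq_map, ← PresentedGroup.closure_range_of, MonoidHom.map_closure,
    ← Set.range_comp]
  congr 1
  ext x
  constructor
  · rintro ⟨k, rfl⟩
    exact ⟨k + 1, ⟨by omega, by omega⟩, (PresentedGroup.toGroup.of (lift_sgen_eq_one hn)).symm⟩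
  · rintro ⟨i, ⟨h1, h2⟩, rfl⟩
    exact ⟨⟨i - 1, by omega⟩, by simp [sgenHom, PresentedGroup.toGroup.of, Nat.sub_add_cancel h1]⟩

end SgenHom

/-- For `n ≥ 3`, the subgroup of `A(B_n)` generated by
`s_1, …, s_n` is isomorphic to `A(Ã_{n-1})` via an isomorphism sending the
standard generator `a_i` to `s_i` for every `i ∈ {1, …, n}`. -/
theorem subgroup_generated_by_s_iso_Atilde (n : ℕ) (hn : 3 ≤ n) :
    ∃ φ : Atilde n ≃* (Subgroup.closure (sgen n '' Set.Icc 1 n) : Subgroup (ArtinB n)),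
      ∀ i : ℕ, 1 ≤ i → i ≤ n → ((φ (a n i) : ArtinB n) = sgen n i) :=
  ⟨(MonoidHom.ofInjective (sgenHom_injective hn)).trans (MulEquiv.subgroupCongr (sgenHom_range hn)),
    fun _ h1 h2 => sgenHom_a hn h1 h2⟩

end Stmt0
end

section
/- Let n ≥ 2. In the Artin group A(B_n) with standard generators t, s_1, …, s_{n-1}, set δ = t·s_1·s_2⋯s_{n-1} and s_n = δ·s_{n-1}·δ⁻¹. There is a (unique) group homomorphism A(B_n) → ℤ sending t to 1 and each s_i (1 ≤ i ≤ n-1) to 0, and the kernel of this homomorphism equals the subgroup of A(B_n) generated by s_1, …, s_n. -/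
/-!
Every defining relator has exponent sum zero in `t`, so the exponent sum of `t` is a
homomorphism `A(B_n) → ℤ`; it kills `s₁, …, s_{n-1}` and hence their conjugate `s_n`.

Conversely, put `σ = s₁ ⋯ s_{n-1}`, so that `δ = tσ`. The braid relations give
`σ sᵢ = sᵢ₊₁ σ`, and since `t` commutes with `s₂, …, s_{n-1}` also `δ sᵢ = sᵢ₊₁ δ` for
`1 ≤ i ≤ n - 2`. Writing `σ = s₁ σ'` with `σ' = s₂ ⋯ s_{n-1}`, the same shift gives
`σ' σ s_{n-1} = σ²`, and then the relation `t s₁ t s₁ = s₁ t s₁ t` yields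
`δ² s_{n-1} = s₁ δ²`, i.e. `δ s_n δ⁻¹ = s₁`. Thus conjugation by `δ` permutes
`s₁, …, s_n` cyclically, so the subgroup `K` they generate is normalised by `δ`, by the `sᵢ`
and by `t = δ σ⁻¹`: it is normal. In `A(B_n)/K` every `sᵢ` is trivial, so the projection
factors through the exponent sum as `g ↦ t ^ (exponent sum of g)`, and the kernel of the
exponent sum lies in `K`.
-/

namespace Stmt1

/-- The braid relator `x y x (y x y)⁻¹` (weight 3). -/
def braidRel {γ : Type} (x y : FreeGroup γ) : FreeGroup γ := x * y * x * (y * x * y)⁻¹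

/-- The commutation relator `x y (y x)⁻¹` (weight 2). -/
def commRel {γ : Type} (x y : FreeGroup γ) : FreeGroup γ := x * y * (y * x)⁻¹

/-- The weight-4 relator `x y x y (y x y x)⁻¹`. -/
def w4Rel {γ : Type} (x y : FreeGroup γ) : FreeGroup γ := x * y * x * y * (y * x * y * x)⁻¹

/-- Relations of the Artin group `A(B_n)`.  Generator `0` is `t` and generator
`i` (for `1 ≤ i ≤ n - 1`) is `s_i`. -/
def BnRels (n : ℕ) : Set (FreeGroup (Fin n)) :=
  { r | ∃ i j : Fin n,
      ((i : ℕ) = 0 ∧ (j : ℕ) = 1 ∧ r = w4Rel (.of i) (.of j)) ∨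
      (1 ≤ (i : ℕ) ∧ (j : ℕ) = (i : ℕ) + 1 ∧ r = braidRel (.of i) (.of j)) ∨
      ((i : ℕ) = 0 ∧ 2 ≤ (j : ℕ) ∧ r = commRel (.of i) (.of j)) ∨
      (1 ≤ (i : ℕ) ∧ (i : ℕ) + 2 ≤ (j : ℕ) ∧ r = commRel (.of i) (.of j)) }

/-- The Artin group `A(B_n)`. -/
abbrev ArtinB (n : ℕ) : Type := PresentedGroup (BnRels n)

/-- The standard generators of `A(B_n)`: `bgen n 0 = t` and `bgen n i = s_i`
for `1 ≤ i ≤ n - 1` (junk value `1` otherwise). -/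
def bgen (n : ℕ) (i : ℕ) : ArtinB n :=
  if h : i < n then PresentedGroup.of ⟨i, h⟩ else 1

/-- The element `δ = t · s_1 · s_2 ⋯ s_{n-1}` of `A(B_n)`. -/
def delta (n : ℕ) : ArtinB n := ((List.range n).map (bgen n)).prod

/-- The elements `s_1, …, s_n` of `A(B_n)`, where `s_n = δ · s_{n-1} · δ⁻¹`. -/
def sgen (n : ℕ) (i : ℕ) : ArtinB n :=
  if i = n then delta n * bgen n (n - 1) * (delta n)⁻¹ else bgen n i

section BraidBlock

variable {G : Type*} [Group G]

def blockProd (s : ℕ → G) (a k : ℕ) : G := ((List.range' a k).map s).prod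

/-- `s a, …, s (a + k - 1)` satisfy the relations of the braid group on `k + 1` strands. -/
def IsBraidBlock (s : ℕ → G) (a k : ℕ) : Prop :=
  (∀ i, a ≤ i → i + 2 ≤ a + k → s i * s (i + 1) * s i = s (i + 1) * s i * s (i + 1)) ∧
  ∀ i j, a ≤ i → i + 2 ≤ j → j < a + k → Commute (s i) (s j)

variable {s : ℕ → G}

@[simp]
lemma blockProd_zero (s : ℕ → G) (a : ℕ) : blockProd s a 0 = 1 := rfl

lemma blockProd_succ (s : ℕ → G) (a k : ℕ) :
    blockProd s a (k + 1) = s a * blockProd s (a + 1) k := by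
  simp [blockProd, List.range'_succ]

lemma blockProd_succ' (s : ℕ → G) (a k : ℕ) :
    blockProd s a (k + 1) = blockProd s a k * s (a + k) := by
  simp [blockProd, List.range'_concat]

lemma commute_blockProd {c : G} {a k : ℕ} (h : ∀ j, a ≤ j → j < a + k → Commute c (s j)) :
    Commute c (blockProd s a k) :=
  Commute.list_prod_right _ _ <| by
    simp only [List.mem_map, List.mem_range'_1]
    rintro _ ⟨j, hj, rfl⟩
    exact h j hj.1 hj.2

lemma blockProd_mem {H : Subgroup G} {a k : ℕ} (h : ∀ j, a ≤ j → j < a + k → s j ∈ H) :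
    blockProd s a k ∈ H :=
  H.list_prod_mem <| by
    simp only [List.mem_map, List.mem_range'_1]
    rintro _ ⟨j, hj, rfl⟩
    exact h j hj.1 hj.2

lemma IsBraidBlock.tail {a k : ℕ} (h : IsBraidBlock s a (k + 1)) : IsBraidBlock s (a + 1) k :=
  ⟨fun i _ _ => h.1 i (by omega) (by omega), fun i j _ hij _ => h.2 i j (by omega) hij (by omega)⟩

lemma IsBraidBlock.blockProd_mul {a k : ℕ} (h : IsBraidBlock s a k) {i : ℕ} (hai : a ≤ i)
    (hik : i + 2 ≤ a + k) : blockProd s a k * s i = s (i + 1) * blockProd s a k := by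
  induction k generalizing a with
  | zero => omega
  | succ k ih =>
    rw [blockProd_succ]
    rcases hai.lt_or_eq with hai | rfl
    · rw [mul_assoc, ih h.tail hai (by omega), ← mul_assoc, ← mul_assoc,
        (h.2 a (i + 1) le_rfl (by omega) (by omega)).eq]
    · obtain ⟨k, rfl⟩ : ∃ k', k = k' + 1 := ⟨k - 1, by omega⟩
      have hcomm : Commute (s a) (blockProd s (a + 2) k) :=
        commute_blockProd fun j hj hjk => h.2 a j le_rfl hj (by omega)
      rw [blockProd_succ, ← mul_assoc, mul_assoc _ _ (s a), ← hcomm.eq, ← mul_assoc,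
        h.1 a le_rfl (by omega)]
      simp only [mul_assoc]

lemma IsBraidBlock.blockProd_mul_blockProd {a k : ℕ} (h : IsBraidBlock s a k) {p : ℕ}
    (hp : p + 1 ≤ k) :
    blockProd s a k * blockProd s a p = blockProd s (a + 1) p * blockProd s a k := by
  induction p with
  | zero => simp
  | succ p ih =>
    rw [blockProd_succ', ← mul_assoc, ih (by omega), mul_assoc,
      h.blockProd_mul (by omega) (by omega), ← mul_assoc, blockProd_succ',
      show a + p + 1 = a + 1 + p by omega]

end BraidBlock

section ArtinB

variable {n : ℕ}

lemma mk_of_eq_bgen (i : Fin n) : PresentedGroup.mk (BnRels n) (FreeGroup.of i) = bgen n i := by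
  simp [bgen, PresentedGroup.of]

lemma of_eq_bgen (i : Fin n) : PresentedGroup.of i = bgen n i := mk_of_eq_bgen i

lemma bgen_of_not_lt {i : ℕ} (h : ¬ i < n) : bgen n i = 1 := dif_neg h

lemma bgen_w4 (hn : 2 ≤ n) :
    bgen n 0 * bgen n 1 * bgen n 0 * bgen n 1 = bgen n 1 * bgen n 0 * bgen n 1 * bgen n 0 := by
  have h := PresentedGroup.one_of_mem (rels := BnRels n)
    (x := w4Rel (.of ⟨0, by omega⟩) (.of ⟨1, hn⟩)) ⟨_, _, .inl ⟨rfl, rfl, rfl⟩⟩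
  rw [w4Rel, map_mul, map_inv, mul_inv_eq_one] at h
  simpa only [map_mul, mk_of_eq_bgen] using h

lemma bgen_braid {i : ℕ} (h1 : 1 ≤ i) (h2 : i + 2 ≤ n) :
    bgen n i * bgen n (i + 1) * bgen n i = bgen n (i + 1) * bgen n i * bgen n (i + 1) := by
  have h := PresentedGroup.one_of_mem (rels := BnRels n)
    (x := braidRel (.of ⟨i, by omega⟩) (.of ⟨i + 1, h2⟩)) ⟨_, _, .inr (.inl ⟨h1, rfl, rfl⟩)⟩
  rw [braidRel, map_mul, map_inv, mul_inv_eq_one] at h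
  simpa only [map_mul, mk_of_eq_bgen] using h

lemma commute_bgen_zero {j : ℕ} (hj : 2 ≤ j) : Commute (bgen n 0) (bgen n j) := by
  by_cases hjn : j < n
  · have h := PresentedGroup.one_of_mem (rels := BnRels n)
      (x := commRel (.of ⟨0, by omega⟩) (.of ⟨j, hjn⟩)) ⟨_, _, .inr (.inr (.inl ⟨rfl, hj, rfl⟩))⟩
    rw [commRel, map_mul, map_inv, mul_inv_eq_one] at h
    simp only [map_mul, mk_of_eq_bgen] at h
    exact h
  · simp [bgen_of_not_lt hjn]

lemma commute_bgen {i j : ℕ} (hi : 1 ≤ i) (hij : i + 2 ≤ j) : Commute (bgen n i) (bgen n j) := by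
  by_cases hjn : j < n
  · have h := PresentedGroup.one_of_mem (rels := BnRels n)
      (x := commRel (.of ⟨i, by omega⟩) (.of ⟨j, hjn⟩)) ⟨_, _, .inr (.inr (.inr ⟨hi, hij, rfl⟩))⟩
    rw [commRel, map_mul, map_inv, mul_inv_eq_one] at h
    simp only [map_mul, mk_of_eq_bgen] at h
    exact h
  · simp [bgen_of_not_lt hjn]

end ArtinB

section Delta

variable {n : ℕ}

lemma isBraidBlock_bgen : IsBraidBlock (bgen n) 1 (n - 1) :=
  ⟨fun _ hi hin => bgen_braid hi (by omega), fun _ _ hi hij _ => commute_bgen hi hij⟩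

lemma delta_eq_bgen_zero_mul (hn : 1 ≤ n) : delta n = bgen n 0 * blockProd (bgen n) 1 (n - 1) := by
  obtain ⟨m, rfl⟩ : ∃ m, n = m + 1 := ⟨n - 1, by omega⟩
  rw [delta, List.range_eq_range', ← blockProd, blockProd_succ, Nat.add_sub_cancel]

lemma delta_mul_bgen {i : ℕ} (h1 : 1 ≤ i) (h2 : i + 2 ≤ n) :
    delta n * bgen n i = bgen n (i + 1) * delta n := by
  rw [delta_eq_bgen_zero_mul (by omega), mul_assoc,
    isBraidBlock_bgen.blockProd_mul h1 (by omega), ← mul_assoc,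
    (commute_bgen_zero (by omega)).eq, mul_assoc]

lemma delta_sq_mul_bgen (hn : 2 ≤ n) :
    delta n * delta n * bgen n (n - 1) = bgen n 1 * (delta n * delta n) := by
  have hσ : blockProd (bgen n) 1 (n - 1) = bgen n 1 * blockProd (bgen n) 2 (n - 2) := by
    rw [show n - 1 = n - 2 + 1 by omega, blockProd_succ]
  have hδ : delta n = bgen n 0 * bgen n 1 * blockProd (bgen n) 2 (n - 2) := by
    rw [delta_eq_bgen_zero_mul (by omega), hσ, mul_assoc]
  have hσσ : blockProd (bgen n) 2 (n - 2) * bgen n 1 * blockProd (bgen n) 2 (n - 2) *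
      bgen n (n - 1) = bgen n 1 * blockProd (bgen n) 2 (n - 2) * bgen n 1 *
      blockProd (bgen n) 2 (n - 2) := by
    have hshift : blockProd (bgen n) 1 (n - 1) * blockProd (bgen n) 1 (n - 2) =
        blockProd (bgen n) 2 (n - 2) * blockProd (bgen n) 1 (n - 1) :=
      (isBraidBlock_bgen (n := n)).blockProd_mul_blockProd (by omega)
    have hlast : blockProd (bgen n) 1 (n - 2) * bgen n (n - 1) = blockProd (bgen n) 1 (n - 1) := by
      rw [show n - 1 = n - 2 + 1 by omega, blockProd_succ', Nat.add_comm 1]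
    rw [mul_assoc _ (bgen n 1), ← hσ, ← hshift, mul_assoc, hlast, hσ, ← mul_assoc]
  have ht : Commute (bgen n 0) (blockProd (bgen n) 2 (n - 2)) :=
    commute_blockProd fun j hj _ => commute_bgen_zero hj
  have hw4 := bgen_w4 hn
  rw [hδ]
  generalize bgen n 0 = t, bgen n 1 = x, bgen n (n - 1) = y,
    blockProd (bgen n) 2 (n - 2) = σ' at hσσ ht hw4 ⊢
  calc t * x * σ' * (t * x * σ') * y
      = t * x * t * (σ' * x * σ' * y) := by simp only [mul_assoc, ht.left_comm]
    _ = x * t * x * t * (σ' * x * σ') := by rw [hσσ]; simp only [← mul_assoc, hw4]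
    _ = x * (t * x * σ' * (t * x * σ')) := by simp only [mul_assoc, ht.left_comm]

end Delta

section Kernel

variable {n : ℕ}

lemma sgen_of_ne {i : ℕ} (h : i ≠ n) : sgen n i = bgen n i := if_neg h

lemma sgen_self : sgen n n = delta n * bgen n (n - 1) * (delta n)⁻¹ := if_pos rfl

lemma bgen_mem_closure_sgen {i : ℕ} (h1 : 1 ≤ i) (h2 : i < n) :
    bgen n i ∈ Subgroup.closure (sgen n '' Set.Icc 1 n) :=
  Subgroup.subset_closure ⟨i, ⟨h1, h2.le⟩, sgen_of_ne h2.ne⟩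

lemma hom_ext_bgen {H : Type*} [Group H] {f g : ArtinB n →* H} (h0 : f (bgen n 0) = g (bgen n 0))
    (hs : ∀ i, 1 ≤ i → i < n → f (bgen n i) = g (bgen n i)) : f = g := by
  refine PresentedGroup.ext fun i => ?_
  rw [of_eq_bgen]
  rcases Nat.eq_zero_or_pos i with hi | hi
  · rw [hi, h0]
  · exact hs i hi i.2

lemma conj_delta_sgen {i : ℕ} (h1 : 1 ≤ i) (h2 : i < n) :
    delta n * sgen n i * (delta n)⁻¹ = sgen n (i + 1) := by
  rcases (show i + 1 ≤ n by omega).eq_or_lt with hi | hi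
  · rw [hi, sgen_of_ne h2.ne, sgen_self, ← hi, Nat.add_sub_cancel]
  · rw [sgen_of_ne h2.ne, sgen_of_ne hi.ne, delta_mul_bgen h1 hi, mul_inv_cancel_right]

lemma conj_delta_sgen_self (hn : 2 ≤ n) : delta n * sgen n n * (delta n)⁻¹ = sgen n 1 := by
  rw [sgen_self, sgen_of_ne (by omega),
    show delta n * (delta n * bgen n (n - 1) * (delta n)⁻¹) * (delta n)⁻¹ =
      delta n * delta n * bgen n (n - 1) * (delta n * delta n)⁻¹ by group,
    delta_sq_mul_bgen hn, mul_inv_cancel_right]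

lemma conj_delta_image_sgen (hn : 2 ≤ n) :
    MulAut.conj (delta n) '' (sgen n '' Set.Icc 1 n) = sgen n '' Set.Icc 1 n := by
  simp only [Set.image_image, MulAut.conj_apply]
  ext x
  constructor
  · rintro ⟨i, ⟨h1, h2⟩, rfl⟩
    rcases h2.lt_or_eq with h2 | rfl
    · exact ⟨i + 1, ⟨by omega, h2⟩, (conj_delta_sgen h1 h2).symm⟩
    · exact ⟨1, ⟨le_rfl, by omega⟩, (conj_delta_sgen_self hn).symm⟩
  · rintro ⟨j, ⟨h1, h2⟩, rfl⟩
    rcases h1.eq_or_lt with rfl | h1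
    · exact ⟨n, ⟨by omega, le_rfl⟩, conj_delta_sgen_self hn⟩
    · refine ⟨j - 1, ⟨by omega, by omega⟩, ?_⟩
      dsimp only
      rw [conj_delta_sgen (by omega) (by omega), Nat.sub_add_cancel h1.le]

lemma closure_sgen_normal (hn : 2 ≤ n) : (Subgroup.closure (sgen n '' Set.Icc 1 n)).Normal := by
  have hδ : delta n ∈ Subgroup.normalizer (Subgroup.closure (sgen n '' Set.Icc 1 n) : Set _) :=
    Subgroup.normalizer_le_normalizer_closure _
      (Subgroup.mem_normalizer_iff_conj_image_eq.2 (conj_delta_image_sgen hn))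
  rw [← Subgroup.normalizer_eq_top_iff, eq_top_iff, ← PresentedGroup.closure_range_of,
    Subgroup.closure_le]
  rintro _ ⟨i, rfl⟩
  rw [SetLike.mem_coe, of_eq_bgen]
  rcases Nat.eq_zero_or_pos i with hi | hi
  · rw [hi, ← mul_inv_cancel_right (bgen n 0) (blockProd (bgen n) 1 (n - 1)),
      ← delta_eq_bgen_zero_mul (by omega)]
    exact mul_mem hδ <| inv_mem <| Subgroup.le_normalizer <|
      blockProd_mem fun j h1 h2 => bgen_mem_closure_sgen h1 (by omega)
  · exact Subgroup.le_normalizer (bgen_mem_closure_sgen hi i.2)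

def tExponentOnGen (n : ℕ) (i : Fin n) : Multiplicative ℤ :=
  if (i : ℕ) = 0 then .ofAdd 1 else 1

lemma lift_tExponentOnGen_of_mem_rels :
    ∀ r ∈ BnRels n, FreeGroup.lift (tExponentOnGen n) r = 1 := by
  rintro r ⟨i, j, ⟨hi, hj, rfl⟩ | ⟨hi, hj, rfl⟩ | ⟨hi, hj, rfl⟩ | ⟨hi, hj, rfl⟩⟩ <;>
    have hj0 : (j : ℕ) ≠ 0 := by omega
  all_goals simp_all [w4Rel, braidRel, commRel, tExponentOnGen, Nat.one_le_iff_ne_zero]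

def tExponentSum (n : ℕ) : ArtinB n →* Multiplicative ℤ :=
  PresentedGroup.toGroup lift_tExponentOnGen_of_mem_rels

lemma tExponentSum_bgen_zero (hn : 0 < n) : tExponentSum n (bgen n 0) = .ofAdd 1 := by
  simp [tExponentSum, bgen, hn, tExponentOnGen]

lemma tExponentSum_bgen {i : ℕ} (hi : 1 ≤ i) : tExponentSum n (bgen n i) = 1 := by
  by_cases hin : i < n
  · simp [tExponentSum, bgen, hin, tExponentOnGen, show i ≠ 0 by omega]
  · rw [bgen_of_not_lt hin, map_one]

lemma closure_sgen_le_ker_tExponentSum (hn : 2 ≤ n) :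
    Subgroup.closure (sgen n '' Set.Icc 1 n) ≤ (tExponentSum n).ker := by
  rw [Subgroup.closure_le]
  rintro _ ⟨i, ⟨h1, h2⟩, rfl⟩
  rcases h2.lt_or_eq with h2 | rfl
  · simp [sgen_of_ne h2.ne, tExponentSum_bgen h1]
  · simp [sgen_self, tExponentSum_bgen (show 1 ≤ i - 1 by omega)]

lemma ker_tExponentSum_le_closure_sgen (hn : 2 ≤ n) :
    (tExponentSum n).ker ≤ Subgroup.closure (sgen n '' Set.Icc 1 n) := by
  have := closure_sgen_normal hn
  let q := QuotientGroup.mk' (Subgroup.closure (sgen n '' Set.Icc 1 n))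
  have hq : (zpowersHom _ (q (bgen n 0))).comp (tExponentSum n) = q := by
    refine hom_ext_bgen ?_ fun i h1 h2 => ?_
    · simp [tExponentSum_bgen_zero (by omega : 0 < n)]
    · rw [MonoidHom.comp_apply, tExponentSum_bgen h1, map_one, eq_comm,
        QuotientGroup.mk'_apply, QuotientGroup.eq_one_iff]
      exact bgen_mem_closure_sgen h1 h2
  intro g hg
  have hqg : q g = 1 := by rw [← hq, MonoidHom.comp_apply, MonoidHom.mem_ker.1 hg, map_one]
  exact (QuotientGroup.eq_one_iff g).1 hqg

end Kernel

/-- For `n ≥ 2` there is a unique group homomorphism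
`A(B_n) → ℤ` sending `t` to `1` and each `s_i` (`1 ≤ i ≤ n - 1`) to `0`, and
its kernel is the subgroup generated by `s_1, …, s_n`. -/
theorem ker_exponent_sum_hom_eq_closure (n : ℕ) (hn : 2 ≤ n) :
    ∃ φ : ArtinB n →* Multiplicative ℤ,
      (φ (bgen n 0) = Multiplicative.ofAdd 1 ∧
        ∀ i : ℕ, 1 ≤ i → i ≤ n - 1 → φ (bgen n i) = 1) ∧
      (∀ ψ : ArtinB n →* Multiplicative ℤ,
        (ψ (bgen n 0) = Multiplicative.ofAdd 1 ∧
          ∀ i : ℕ, 1 ≤ i → i ≤ n - 1 → ψ (bgen n i) = 1) → ψ = φ) ∧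
      MonoidHom.ker φ = Subgroup.closure (sgen n '' Set.Icc 1 n) := by
  refine ⟨tExponentSum n, ⟨tExponentSum_bgen_zero (by omega), fun i h1 _ => tExponentSum_bgen h1⟩,
    fun ψ ⟨h0, hs⟩ => hom_ext_bgen ?_ fun i h1 h2 => ?_,
    (ker_tExponentSum_le_closure_sgen hn).antisymm (closure_sgen_le_ker_tExponentSum hn)⟩
  · rw [h0, tExponentSum_bgen_zero (by omega)]
  · rw [hs i h1 (by omega), tExponentSum_bgen h1]

end Stmt1
end

section
/- Let n ≥ 3, let G be a group, and let T_1, …, T_n ∈ G satisfy the circuit relations: T_i·T_{i+1}·T_i = T_{i+1}·T_i·T_{i+1} for all i with indices taken modulo n (in particular T_n·T_1·T_n = T_1·T_n·T_1), and T_i·T_j = T_j·T_i whenever i and j are not cyclically adjacent modulo n. Then the cycle relation T_n·T_{n-1}⋯T_1 · T_n·T_{n-1}⋯T_3 = T_{n-1}·T_{n-2}⋯T_1 · T_n·T_{n-1}⋯T_2 holds in G if and only if T_1 commutes with the element f = (T_n·T_{n-1}⋯T_3)·T_2·(T_n·T_{n-1}⋯T_3)⁻¹. -/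
namespace Stmt3

/-- The descending product `T_m · T_{m-1} ⋯ T_k` (equal to `1` if `m < k`). -/
def dprod {G : Type} [Group G] (T : ℕ → G) (k m : ℕ) : G :=
  ((List.range' k (m + 1 - k)).reverse.map T).prod

lemma dprod_nil {G : Type} [Group G] (T : ℕ → G) {k m : ℕ} (h : m + 1 ≤ k) :
    dprod T k m = 1 := by
  unfold dprod
  rw [show m + 1 - k = 0 by omega]
  simp

lemma dprod_succ {G : Type} [Group G] (T : ℕ → G) {k m : ℕ} (h : k ≤ m + 1) :
    dprod T k (m + 1) = T (m + 1) * dprod T k m := by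
  unfold dprod
  rw [show m + 1 + 1 - k = (m + 1 - k) + 1 by omega, List.range'_concat,
    show k + 1 * (m + 1 - k) = m + 1 by omega]
  simp

lemma dprod_cons {G : Type} [Group G] (T : ℕ → G) {k m : ℕ} (h : k ≤ m) :
    dprod T k m = dprod T (k + 1) m * T k := by
  unfold dprod
  rw [show m + 1 - k = (m - k) + 1 by omega, List.range'_succ,
    show m + 1 - (k + 1) = m - k by omega]
  simp

lemma commute_dprod {G : Type} [Group G] {T : ℕ → G} {x : G} {k m : ℕ}
    (h : ∀ j, k ≤ j → j ≤ m → x * T j = T j * x) :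
    x * dprod T k m = dprod T k m * x := by
  have : Commute x (dprod T k m) := by
    apply Commute.list_prod_right
    intro y hy
    simp only [List.mem_map, List.mem_reverse, List.mem_range'_1] at hy
    obtain ⟨j, ⟨hj1, hj2⟩, rfl⟩ := hy
    exact h j hj1 (by omega)
  exact this

lemma braid_conj {G : Type} [Group G] {a b : G} (h : a * b * a = b * a * b) :
    a⁻¹ * b * a = b * a * b⁻¹ := by
  have h2 := congrArg (fun x => a⁻¹ * x * b⁻¹) h
  simpa [mul_assoc] using h2.symm

lemma conj_swap {G : Type} [Group G] {a e : G} (h : a * e = e * a) (x : G) :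
    e⁻¹ * (a * x * a⁻¹) * e = a * (e⁻¹ * x * e) * a⁻¹ := by
  have hc : Commute a e := h
  have h1 : e⁻¹ * a = a * e⁻¹ := hc.inv_right.eq.symm
  have h2 : a⁻¹ * e = e * a⁻¹ := hc.inv_left.eq
  calc e⁻¹ * (a * x * a⁻¹) * e = (e⁻¹ * a) * x * (a⁻¹ * e) := by group
    _ = (a * e⁻¹) * x * (e * a⁻¹) := by rw [h1, h2]
    _ = a * (e⁻¹ * x * e) * a⁻¹ := by group

lemma aux_iff {G : Type} [Group G] (a b c d : G) :
    a * c * b = c * (b * d) ↔ c⁻¹ * a * c = b * d * b⁻¹ := by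
  constructor <;> intro h
  · rw [show a = c * (b * d) * b⁻¹ * c⁻¹ by rw [← h]; group]; group
  · rw [show a = c * (b * d * b⁻¹) * c⁻¹ by rw [← h]; group]; group

lemma aux2_iff {G : Type} [Group G] (x f : G) : x⁻¹ * f * x = f ↔ x * f = f * x := by
  rw [mul_assoc, inv_mul_eq_iff_eq_mul]
  exact eq_comm

/-- Let `n ≥ 3` and let `T_1, …, T_n` be elements of a group `G`
satisfying the circuit relations (braid relations between cyclically adjacent
indices, commutation relations between cyclically non-adjacent indices, indices
taken in `{1, …, n}` with successor `i % n + 1`).  Then the cycle relation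
`T_n ⋯ T_1 · T_n ⋯ T_3 = T_{n-1} ⋯ T_1 · T_n ⋯ T_2` holds if and only if `T_1`
commutes with `f = (T_n ⋯ T_3) · T_2 · (T_n ⋯ T_3)⁻¹`. -/
theorem cycle_relation_iff_commutation (n : ℕ) (hn : 3 ≤ n) {G : Type} [Group G]
    (T : ℕ → G)
    (hbraid : ∀ i : ℕ, 1 ≤ i → i ≤ n →
      T i * T (i % n + 1) * T i = T (i % n + 1) * T i * T (i % n + 1))
    (hcomm : ∀ i j : ℕ, 1 ≤ i → i ≤ n → 1 ≤ j → j ≤ n →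
      j ≠ i % n + 1 → i ≠ j % n + 1 → T i * T j = T j * T i) :
    (dprod T 1 n * dprod T 3 n = dprod T 1 (n - 1) * dprod T 2 n) ↔
      (T 1 * (dprod T 3 n * T 2 * (dprod T 3 n)⁻¹) =
        (dprod T 3 n * T 2 * (dprod T 3 n)⁻¹) * T 1) := by
  obtain ⟨p, rfl⟩ : ∃ p, n = p + 2 + 1 := ⟨n - 3, by omega⟩
  have comm' : ∀ i j, 2 ≤ j → j + 2 ≤ i → i ≤ p + 2 + 1 → T i * T j = T j * T i := by
    intro i j hj hji hin
    rcases eq_or_lt_of_le hin with h | h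
    · exact hcomm i j (by omega) hin (by omega) (by omega)
        (by rw [h, Nat.mod_self]; omega) (by rw [Nat.mod_eq_of_lt (by omega)]; omega)
    · exact hcomm i j (by omega) hin (by omega) (by omega)
        (by rw [Nat.mod_eq_of_lt h]; omega) (by rw [Nat.mod_eq_of_lt (by omega)]; omega)
  have braid' : ∀ i, 1 ≤ i → i + 1 ≤ p + 2 + 1 →
      T i * T (i + 1) * T i = T (i + 1) * T i * T (i + 1) := by
    intro i h1 h2
    have h3 : i % (p + 2 + 1) = i := Nat.mod_eq_of_lt (by omega)
    have := hbraid i h1 (by omega)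
    rwa [h3] at this
  have L1 : ∀ m, 2 ≤ m → m + 1 ≤ p + 2 + 1 →
      (dprod T 3 m)⁻¹ * T (m + 1) * dprod T 3 m
        = dprod T 4 (m + 1) * T 3 * (dprod T 4 (m + 1))⁻¹ := by
    intro m hm
    induction m, hm using Nat.le_induction with
    | base =>
      intro _
      rw [dprod_nil T (le_refl 3), dprod_nil T (by norm_num : (2:ℕ) + 1 + 1 ≤ 4)]
      simp
    | succ m hm ih =>
      intro hmn
      have ihm := ih (by omega)
      have hb := braid_conj (braid' (m + 1) (by omega) (by omega))
      have hc : T (m + 1 + 1) * dprod T 3 m = dprod T 3 m * T (m + 1 + 1) :=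
        commute_dprod (fun j hj1 hj2 => comm' (m + 1 + 1) j (by omega) (by omega) (by omega))
      rw [dprod_succ T (show 3 ≤ m + 1 by omega), dprod_succ T (show 4 ≤ m + 1 + 1 by omega)]
      calc (T (m + 1) * dprod T 3 m)⁻¹ * T (m + 1 + 1) * (T (m + 1) * dprod T 3 m)
          = (dprod T 3 m)⁻¹ * ((T (m + 1))⁻¹ * T (m + 1 + 1) * T (m + 1)) * dprod T 3 m := by
            group
        _ = (dprod T 3 m)⁻¹ * (T (m + 1 + 1) * T (m + 1) * (T (m + 1 + 1))⁻¹) * dprod T 3 m := by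
            rw [hb]
        _ = T (m + 1 + 1) * ((dprod T 3 m)⁻¹ * T (m + 1) * dprod T 3 m) * (T (m + 1 + 1))⁻¹ :=
            conj_swap hc _
        _ = T (m + 1 + 1) * (dprod T 4 (m + 1) * T 3 * (dprod T 4 (m + 1))⁻¹) * (T (m + 1 + 1))⁻¹ := by
            rw [ihm]
        _ = (T (m + 1 + 1) * dprod T 4 (m + 1)) * T 3 * (T (m + 1 + 1) * dprod T 4 (m + 1))⁻¹ := by
            group
  have hC : dprod T 1 (p + 2) = dprod T 3 (p + 2) * T 2 * T 1 := by
    rw [show dprod T 1 (p + 2) = dprod T 2 (p + 2) * T 1 from dprod_cons T (by omega),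
        show dprod T 2 (p + 2) = dprod T 3 (p + 2) * T 2 from dprod_cons T (by omega)]
  have hBE : dprod T 3 (p + 2 + 1) = dprod T 4 (p + 2 + 1) * T 3 := dprod_cons T (by omega)
  have commE : T 2 * dprod T 4 (p + 2 + 1) = dprod T 4 (p + 2 + 1) * T 2 :=
    commute_dprod (fun j hj1 hj2 => (comm' j 2 (le_refl 2) (by omega) hj2).symm)
  have braid23 : T 2 * T 3 * T 2 = T 3 * T 2 * T 3 := braid' 2 (by omega) (by omega)
  have e2 : (T 2)⁻¹ * T 3 * T 2 = T 3 * T 2 * (T 3)⁻¹ := braid_conj braid23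
  have hL1 : (dprod T 3 (p + 2))⁻¹ * T (p + 2 + 1) * dprod T 3 (p + 2)
      = dprod T 4 (p + 2 + 1) * T 3 * (dprod T 4 (p + 2 + 1))⁻¹ :=
    L1 (p + 2) (by omega) (by omega)
  have key : (dprod T 1 (p + 2))⁻¹ * T (p + 2 + 1) * dprod T 1 (p + 2)
      = (T 1)⁻¹ * (dprod T 3 (p + 2 + 1) * T 2 * (dprod T 3 (p + 2 + 1))⁻¹) * T 1 := by
    rw [hC, hBE]
    calc (dprod T 3 (p + 2) * T 2 * T 1)⁻¹ * T (p + 2 + 1) * (dprod T 3 (p + 2) * T 2 * T 1)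
        = (T 1)⁻¹ * ((T 2)⁻¹ * ((dprod T 3 (p + 2))⁻¹ * T (p + 2 + 1) * dprod T 3 (p + 2)) * T 2) * T 1 := by
          group
      _ = (T 1)⁻¹ * ((T 2)⁻¹ * (dprod T 4 (p + 2 + 1) * T 3 * (dprod T 4 (p + 2 + 1))⁻¹) * T 2) * T 1 := by
          rw [hL1]
      _ = (T 1)⁻¹ * (dprod T 4 (p + 2 + 1) * ((T 2)⁻¹ * T 3 * T 2) * (dprod T 4 (p + 2 + 1))⁻¹) * T 1 := by
          rw [conj_swap commE.symm (T 3)]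
      _ = (T 1)⁻¹ * (dprod T 4 (p + 2 + 1) * (T 3 * T 2 * (T 3)⁻¹) * (dprod T 4 (p + 2 + 1))⁻¹) * T 1 := by
          rw [e2]
      _ = (T 1)⁻¹ * (dprod T 4 (p + 2 + 1) * T 3 * T 2 * (dprod T 4 (p + 2 + 1) * T 3)⁻¹) * T 1 := by
          group
  rw [show p + 2 + 1 - 1 = p + 2 from rfl,
      show dprod T 1 (p + 2 + 1) = T (p + 2 + 1) * dprod T 1 (p + 2) from dprod_succ T (by omega),
      show dprod T 2 (p + 2 + 1) = dprod T 3 (p + 2 + 1) * T 2 from dprod_cons T (by omega),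
      aux_iff (T (p + 2 + 1)) (dprod T 3 (p + 2 + 1)) (dprod T 1 (p + 2)) (T 2), key,
      aux2_iff]

end Stmt3
end
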